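/- arXiv:2305.19222 — 4 statements merged into one kernel-verified Lean document; each statement's English description precedes it below -/
import Mathlib

section
/- For any smooth bounded η with bounded derivatives and f smooth compactly supported: ∫ η f (ℒf)' = −(1/2)∫ η'(3(f')² + V₀ f²) + (1/2)∫ η V₀' f² + (1/2)∫ η''' f², where ℒf = −f'' + V₀f. -/
noncomputable def V₀ : ℝ → ℝ := fun x => 2 - 3 * (1 / Real.cosh (x / Real.sqrt 2)) ^ 2

open MeasureTheory
open scoped ContDiff

lemma V0_smooth : ContDiff ℝ ∞ V₀ := by
  unfold V₀
  refine contDiff_const.sub (contDiff_const.mul (ContDiff.pow ?_ 2))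
  exact contDiff_const.div
    (Real.contDiff_cosh.comp (contDiff_id.div_const _))
    (fun x => (Real.cosh_pos _).ne')

lemma ibp' (u v u' v' : ℝ → ℝ)
    (hu : ∀ x, HasDerivAt u (u' x) x) (hv : ∀ x, HasDerivAt v (v' x) x)
    (h1 : Integrable (fun x => u x * v' x)) (h2 : Integrable (fun x => u' x * v x))
    (h3 : Integrable (fun x => u x * v x)) :
    ∫ x : ℝ, u x * v' x = - ∫ x : ℝ, u' x * v x :=
  integral_mul_deriv_eq_deriv_mul_of_integrable (fun x _ => hu x) (fun x _ => hv x) h1 h2 h3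

theorem integral_opL_deriv_identity
    (η f : ℝ → ℝ)
    (hη : ContDiff ℝ (⊤ : ℕ∞) η) (hηb : ∀ n : ℕ, ∃ C : ℝ, ∀ x, |iteratedDeriv n η x| ≤ C)
    (hf : ContDiff ℝ (⊤ : ℕ∞) f) (hfc : HasCompactSupport f) :
    ∫ x : ℝ, η x * f x * deriv (fun y => -(deriv (deriv f) y) + V₀ y * f y) x
      = -(1 / 2) * (∫ x : ℝ, deriv η x * (3 * (deriv f x) ^ 2 + V₀ x * (f x) ^ 2))
        + (1 / 2) * (∫ x : ℝ, η x * deriv V₀ x * (f x) ^ 2)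
        + (1 / 2) * ∫ x : ℝ, iteratedDeriv 3 η x * (f x) ^ 2 := by
  have hV : ContDiff ℝ ∞ V₀ := V0_smooth
  have hη : ContDiff ℝ ∞ η := hη.of_le (by simp)
  have hf : ContDiff ℝ ∞ f := hf.of_le (by simp)
  -- smoothness of derivatives
  have hf1 : ContDiff ℝ ∞ (deriv f) := (contDiff_infty_iff_deriv.mp hf).2
  have hf2 : ContDiff ℝ ∞ (deriv (deriv f)) := (contDiff_infty_iff_deriv.mp hf1).2
  have hf3 : ContDiff ℝ ∞ (deriv (deriv (deriv f))) := (contDiff_infty_iff_deriv.mp hf2).2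
  have hη1 : ContDiff ℝ ∞ (deriv η) := (contDiff_infty_iff_deriv.mp hη).2
  have hη2 : ContDiff ℝ ∞ (deriv (deriv η)) := (contDiff_infty_iff_deriv.mp hη1).2
  have hη3 : ContDiff ℝ ∞ (deriv (deriv (deriv η))) := (contDiff_infty_iff_deriv.mp hη2).2
  have hV1 : ContDiff ℝ ∞ (deriv V₀) := (contDiff_infty_iff_deriv.mp hV).2
  have hd : ∀ (g : ℝ → ℝ), ContDiff ℝ ∞ g → ∀ x, HasDerivAt g (deriv g x) x :=
    fun g hg x => (hg.differentiable (by simp) x).hasDerivAt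
  have hdsq : ∀ (g : ℝ → ℝ), ContDiff ℝ ∞ g → ∀ x,
      HasDerivAt (fun y => g y ^ 2) (2 * (g x * deriv g x)) x := by
    intro g hg x
    have h := (hd g hg x).fun_pow 2
    refine h.congr_deriv ?_
    ring
  -- compact supports
  have k1 : HasCompactSupport (deriv f) := hfc.deriv
  have k2 : HasCompactSupport (deriv (deriv f)) := k1.deriv
  have k3 : HasCompactSupport (deriv (deriv (deriv f))) := k2.deriv
  have ksq : HasCompactSupport (fun x => f x ^ 2) :=
    hfc.comp_left (g := fun y => y ^ 2) (by simp)
  have ksq1 : HasCompactSupport (fun x => deriv f x ^ 2) :=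
    k1.comp_left (g := fun y => y ^ 2) (by simp)
  have km : HasCompactSupport (fun x => f x * deriv f x) := hfc.mul_right
  have km1 : HasCompactSupport (fun x => deriv f x * deriv (deriv f) x) := k1.mul_right
  -- integrability helper
  have intg : ∀ (u v : ℝ → ℝ), Continuous u → Continuous v → HasCompactSupport v →
      Integrable (fun x => u x * v x) := fun u v hu hv hc =>
    (hu.mul hv).integrable_of_hasCompactSupport hc.mul_left
  have cη := hη.continuous; have cη1 := hη1.continuous; have cη2 := hη2.continuous
  have cη3 := hη3.continuous
  have cf := hf.continuous; have cf1 := hf1.continuous; have cf2 := hf2.continuous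
  have cf3 := hf3.continuous
  have cV := hV.continuous; have cV1 := hV1.continuous
  -- congruence helper
  have icongr : ∀ (g h : ℝ → ℝ), (∀ x, g x = h x) → (∫ x : ℝ, g x) = ∫ x : ℝ, h x :=
    fun g h e => by rw [funext e]
  -- named integrals
  set A := ∫ x : ℝ, η x * f x * deriv (deriv (deriv f)) x with hA
  set B := ∫ x : ℝ, η x * deriv V₀ x * f x ^ 2 with hB
  set C := ∫ x : ℝ, η x * V₀ x * (f x * deriv f x) with hC
  set D := ∫ x : ℝ, deriv η x * V₀ x * f x ^ 2 with hD
  set P := ∫ x : ℝ, deriv η x * deriv f x ^ 2 with hP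
  set Q := ∫ x : ℝ, deriv η x * f x * deriv (deriv f) x with hQ
  set R := ∫ x : ℝ, η x * (deriv f x * deriv (deriv f) x) with hR
  set S := ∫ x : ℝ, deriv (deriv η) x * (f x * deriv f x) with hS
  set T := ∫ x : ℝ, deriv (deriv (deriv η)) x * f x ^ 2 with hT
  -- equation (1): 2*C = -(D + B)
  have e1 : 2 * C = -(D + B) := by
    have h := ibp' (fun x => η x * V₀ x) (fun x => f x ^ 2)
      (fun x => deriv η x * V₀ x + η x * deriv V₀ x) (fun x => 2 * (f x * deriv f x))
      (fun x => (hd η hη x).mul (hd V₀ hV x)) (hdsq f hf)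
      (intg _ _ (cη.mul cV) (continuous_const.mul (cf.mul cf1)) (km.mul_left))
      (intg _ _ ((cη1.mul cV).add (cη.mul cV1)) (cf.pow 2) ksq)
      (intg _ _ (cη.mul cV) (cf.pow 2) ksq)
    calc 2 * C = ∫ x : ℝ, (η x * V₀ x) * (2 * (f x * deriv f x)) := by
          rw [hC, ← integral_const_mul]
          exact icongr _ _ (fun x => by ring)
      _ = - ∫ x : ℝ, (deriv η x * V₀ x + η x * deriv V₀ x) * f x ^ 2 := h
      _ = -(D + B) := by
          rw [hD, hB, ← integral_add (intg (fun x => deriv η x * V₀ x) (fun x => f x ^ 2) (cη1.mul cV) (cf.pow 2) ksq)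
            (intg (fun x => η x * deriv V₀ x) (fun x => f x ^ 2) (cη.mul cV1) (cf.pow 2) ksq)]
          exact congrArg Neg.neg (icongr _ _ (fun x => by ring))
  -- equation (2): A = -(Q + R)
  have e2 : A = -(Q + R) := by
    have h := ibp' (fun x => η x * f x) (deriv (deriv f))
      (fun x => deriv η x * f x + η x * deriv f x) (deriv (deriv (deriv f)))
      (fun x => (hd η hη x).mul (hd f hf x)) (hd _ hf2)
      (intg _ _ (cη.mul cf) cf3 k3)
      (intg _ _ ((cη1.mul cf).add (cη.mul cf1)) cf2 k2)
      (intg _ _ (cη.mul cf) cf2 k2)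
    calc A = ∫ x : ℝ, (η x * f x) * deriv (deriv (deriv f)) x := by
          rw [hA]
      _ = - ∫ x : ℝ, (deriv η x * f x + η x * deriv f x) * deriv (deriv f) x := h
      _ = -(Q + R) := by
          rw [hQ, hR, ← integral_add (intg (fun x => deriv η x * f x) (deriv (deriv f)) (cη1.mul cf) cf2 k2)
            (intg η (fun x => deriv f x * deriv (deriv f) x) cη (cf1.mul cf2) km1)]
          exact congrArg Neg.neg (icongr _ _ (fun x => by ring))
  -- equation (3): Q = -(S + P)
  have e3 : Q = -(S + P) := by
    have h := ibp' (fun x => deriv η x * f x) (deriv f)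
      (fun x => deriv (deriv η) x * f x + deriv η x * deriv f x) (deriv (deriv f))
      (fun x => (hd _ hη1 x).mul (hd f hf x)) (hd _ hf1)
      (intg _ _ (cη1.mul cf) cf2 k2)
      (intg _ _ ((cη2.mul cf).add (cη1.mul cf1)) cf1 k1)
      (intg _ _ (cη1.mul cf) cf1 k1)
    calc Q = ∫ x : ℝ, (deriv η x * f x) * deriv (deriv f) x := by
          rw [hQ]
      _ = - ∫ x : ℝ, (deriv (deriv η) x * f x + deriv η x * deriv f x) * deriv f x := h
      _ = -(S + P) := by
          rw [hS, hP, ← integral_add (intg (deriv (deriv η)) (fun x => f x * deriv f x) cη2 (cf.mul cf1) km)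
            (intg (deriv η) (fun x => deriv f x ^ 2) cη1 (cf1.pow 2) ksq1)]
          exact congrArg Neg.neg (icongr _ _ (fun x => by ring))
  -- equation (4): 2*R = -P
  have e4 : 2 * R = -P := by
    have h := ibp' η (fun x => deriv f x ^ 2)
      (deriv η) (fun x => 2 * (deriv f x * deriv (deriv f) x))
      (hd η hη) (hdsq _ hf1)
      (intg _ _ cη (continuous_const.mul (cf1.mul cf2)) (km1.mul_left))
      (intg _ _ cη1 (cf1.pow 2) ksq1)
      (intg _ _ cη (cf1.pow 2) ksq1)
    calc 2 * R = ∫ x : ℝ, η x * (2 * (deriv f x * deriv (deriv f) x)) := by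
          rw [hR, ← integral_const_mul]
          exact icongr _ _ (fun x => by ring)
      _ = - ∫ x : ℝ, deriv η x * deriv f x ^ 2 := h
      _ = -P := by rw [hP]
  -- equation (5): 2*S = -T
  have e5 : 2 * S = -T := by
    have h := ibp' (deriv (deriv η)) (fun x => f x ^ 2)
      (deriv (deriv (deriv η))) (fun x => 2 * (f x * deriv f x))
      (hd _ hη2) (hdsq f hf)
      (intg _ _ cη2 (continuous_const.mul (cf.mul cf1)) (km.mul_left))
      (intg _ _ cη3 (cf.pow 2) ksq)
      (intg _ _ cη2 (cf.pow 2) ksq)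
    calc 2 * S = ∫ x : ℝ, deriv (deriv η) x * (2 * (f x * deriv f x)) := by
          rw [hS, ← integral_const_mul]
          exact icongr _ _ (fun x => by ring)
      _ = - ∫ x : ℝ, deriv (deriv (deriv η)) x * f x ^ 2 := h
      _ = -T := by rw [hT]
  -- rewrite the goal's LHS
  have lhs_eq : (∫ x : ℝ, η x * f x * deriv (fun y => -(deriv (deriv f) y) + V₀ y * f y) x)
      = -A + (B + C) := by
    have dpt : ∀ x : ℝ, deriv (fun y => -(deriv (deriv f) y) + V₀ y * f y) x
        = -(deriv (deriv (deriv f)) x) + (deriv V₀ x * f x + V₀ x * deriv f x) := by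
      intro x
      rw [deriv_fun_add (f := fun y => -(deriv (deriv f) y)) (g := fun y => V₀ y * f y) ((hf2.differentiable (by simp) x).neg)
        ((hV.differentiable (by simp) x).mul (hf.differentiable (by simp) x)),
        deriv.fun_neg, deriv_fun_mul (hV.differentiable (by simp) x) (hf.differentiable (by simp) x)]
    calc (∫ x : ℝ, η x * f x * deriv (fun y => -(deriv (deriv f) y) + V₀ y * f y) x)
        = ∫ x : ℝ, (η x * deriv V₀ x * f x ^ 2 + η x * V₀ x * (f x * deriv f x))
            - η x * f x * deriv (deriv (deriv f)) x := by
          exact icongr _ _ (fun x => by rw [dpt x]; ring)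
      _ = -A + (B + C) := by
          have iBC : Integrable (fun x => η x * deriv V₀ x * f x ^ 2
              + η x * V₀ x * (f x * deriv f x)) volume :=
            (intg _ _ (cη.mul cV1) (cf.pow 2) ksq).add
              (intg _ _ (cη.mul cV) (cf.mul cf1) km)
          rw [hA, hB, hC, neg_add_eq_sub, ← integral_add
              (intg (fun x => η x * deriv V₀ x) (fun x => f x ^ 2) (cη.mul cV1) (cf.pow 2) ksq)
              (intg (fun x => η x * V₀ x) (fun x => f x * deriv f x) (cη.mul cV) (cf.mul cf1) km),
            ← integral_sub iBC (intg (fun x => η x * f x) (deriv (deriv (deriv f))) (cη.mul cf) cf3 k3)]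
  -- rewrite the goal's RHS pieces
  have rhs1 : (∫ x : ℝ, deriv η x * (3 * (deriv f x) ^ 2 + V₀ x * (f x) ^ 2))
      = 3 * P + D := by
    calc (∫ x : ℝ, deriv η x * (3 * (deriv f x) ^ 2 + V₀ x * (f x) ^ 2))
        = ∫ x : ℝ, 3 * (deriv η x * deriv f x ^ 2) + deriv η x * V₀ x * f x ^ 2 := by
          exact icongr _ _ (fun x => by ring)
      _ = 3 * P + D := by
          rw [hP, hD, integral_add ((intg (deriv η) (fun x => deriv f x ^ 2) cη1 (cf1.pow 2) ksq1).const_mul 3)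
            (intg (fun x => deriv η x * V₀ x) (fun x => f x ^ 2) (cη1.mul cV) (cf.pow 2) ksq), integral_const_mul]
  have rhs2 : (∫ x : ℝ, iteratedDeriv 3 η x * (f x) ^ 2) = T := by
    rw [hT]
    exact icongr _ _ (fun x => by
      simp [iteratedDeriv_succ, iteratedDeriv_zero])
  rw [lhs_eq, rhs1, rhs2]
  linarith
end

section
/- For any smooth bounded η with bounded derivatives and f smooth compactly supported: ∫ η f ℒ(f') = −(1/2)∫ η'(3(f')² + V₀ f²) − (1/2)∫ η V₀' f² + (1/2)∫ η''' f². -/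
open MeasureTheory Set

lemma contDiff_V0 : ContDiff ℝ (⊤ : ℕ∞) V₀ := by
  unfold V₀
  apply ContDiff.sub contDiff_const
  apply ContDiff.mul contDiff_const
  apply ContDiff.pow
  simp only [one_div]
  exact (Real.contDiff_cosh.comp (contDiff_id.div_const _)).inv
    (fun x => (Real.cosh_pos _).ne')

lemma integral_hasDerivAt_eq_zero (F F' : ℝ → ℝ)
    (hd : ∀ x, HasDerivAt F (F' x) x) (hF' : Continuous F')
    (hFc : HasCompactSupport F) : ∫ x : ℝ, F' x = 0 := by
  have hdF : deriv F = F' := funext fun x => (hd x).deriv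
  have hF1 : ContDiff ℝ 1 F := contDiff_one_iff_deriv.mpr
    ⟨fun x => (hd x).differentiableAt, hdF ▸ hF'⟩
  have hFc' : HasCompactSupport F' := hdF ▸ hFc.deriv
  have hint : Integrable F' := hF'.integrable_of_hasCompactSupport hFc'
  have h1 := hFc.integral_Iic_deriv_eq hF1 0
  have h2 := hFc.integral_Ioi_deriv_eq hF1 0
  rw [hdF] at h1 h2
  rw [← intervalIntegral.integral_Iic_add_Ioi (b := 0) hint.integrableOn hint.integrableOn, h1, h2]
  ring

theorem integral_opL_of_deriv_identity
    (η f : ℝ → ℝ)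
    (hη : ContDiff ℝ (⊤ : ℕ∞) η) (hηb : ∀ n : ℕ, ∃ C : ℝ, ∀ x, |iteratedDeriv n η x| ≤ C)
    (hf : ContDiff ℝ (⊤ : ℕ∞) f) (hfc : HasCompactSupport f) :
    ∫ x : ℝ, η x * f x * (-(iteratedDeriv 3 f x) + V₀ x * deriv f x)
      = -(1 / 2) * (∫ x : ℝ, deriv η x * (3 * (deriv f x) ^ 2 + V₀ x * (f x) ^ 2))
        - (1 / 2) * (∫ x : ℝ, η x * deriv V₀ x * (f x) ^ 2)
        + (1 / 2) * ∫ x : ℝ, iteratedDeriv 3 η x * (f x) ^ 2 := by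
  -- smoothness bookkeeping
  have hf0 : ContDiff ℝ (⊤ : ℕ∞) f := hf.of_le (by simp)
  have hη0 : ContDiff ℝ (⊤ : ℕ∞) η := hη.of_le (by simp)
  have hf1 : ContDiff ℝ (⊤ : ℕ∞) (deriv f) := (contDiff_infty_iff_deriv.mp hf0).2
  have hf2 : ContDiff ℝ (⊤ : ℕ∞) (deriv (deriv f)) := (contDiff_infty_iff_deriv.mp hf1).2
  have hf3 : ContDiff ℝ (⊤ : ℕ∞) (deriv (deriv (deriv f))) :=
    (contDiff_infty_iff_deriv.mp hf2).2
  have hη1 : ContDiff ℝ (⊤ : ℕ∞) (deriv η) := (contDiff_infty_iff_deriv.mp hη0).2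
  have hη2 : ContDiff ℝ (⊤ : ℕ∞) (deriv (deriv η)) := (contDiff_infty_iff_deriv.mp hη1).2
  have hη3 : ContDiff ℝ (⊤ : ℕ∞) (deriv (deriv (deriv η))) :=
    (contDiff_infty_iff_deriv.mp hη2).2
  have hV0 : ContDiff ℝ (⊤ : ℕ∞) V₀ := contDiff_V0
  have hV1 : ContDiff ℝ (⊤ : ℕ∞) (deriv V₀) := (contDiff_infty_iff_deriv.mp hV0).2
  have df : ∀ x, HasDerivAt f (deriv f x) x :=
    fun x => ((hf0.differentiable (by simp)) x).hasDerivAt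
  have df1 : ∀ x, HasDerivAt (deriv f) (deriv (deriv f) x) x :=
    fun x => ((hf1.differentiable (by simp)) x).hasDerivAt
  have df2 : ∀ x, HasDerivAt (deriv (deriv f)) (deriv (deriv (deriv f)) x) x :=
    fun x => ((hf2.differentiable (by simp)) x).hasDerivAt
  have dη : ∀ x, HasDerivAt η (deriv η x) x :=
    fun x => ((hη0.differentiable (by simp)) x).hasDerivAt
  have dη1 : ∀ x, HasDerivAt (deriv η) (deriv (deriv η) x) x :=
    fun x => ((hη1.differentiable (by simp)) x).hasDerivAt
  have dη2 : ∀ x, HasDerivAt (deriv (deriv η)) (deriv (deriv (deriv η)) x) x :=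
    fun x => ((hη2.differentiable (by simp)) x).hasDerivAt
  have dV : ∀ x, HasDerivAt V₀ (deriv V₀ x) x :=
    fun x => ((hV0.differentiable (by simp)) x).hasDerivAt
  -- rewrite iterated derivatives
  have hitf : iteratedDeriv 3 f = deriv (deriv (deriv f)) := by
    simp [iteratedDeriv_succ, iteratedDeriv_zero]
  have hitη : iteratedDeriv 3 η = deriv (deriv (deriv η)) := by
    simp [iteratedDeriv_succ, iteratedDeriv_zero]
  rw [hitf, hitη]
  -- integrands
  set A : ℝ → ℝ := fun x => η x * f x * (-(deriv (deriv (deriv f)) x) + V₀ x * deriv f x)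
    with hA_def
  set B₁ : ℝ → ℝ := fun x => deriv η x * (3 * (deriv f x) ^ 2 + V₀ x * (f x) ^ 2) with hB1_def
  set B₂ : ℝ → ℝ := fun x => η x * deriv V₀ x * (f x) ^ 2 with hB2_def
  set B₃ : ℝ → ℝ := fun x => deriv (deriv (deriv η)) x * (f x) ^ 2 with hB3_def
  -- vanishing outside tsupport f
  have hK : IsCompact (tsupport f) := hfc
  have hz : ∀ x ∉ tsupport f, f x = 0 ∧ deriv f x = 0 ∧ deriv (deriv f) x = 0 ∧
      deriv (deriv (deriv f)) x = 0 := by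
    intro x hx
    have h0 : f x = 0 := image_eq_zero_of_notMem_tsupport hx
    have hsub1 : tsupport (deriv f) ⊆ tsupport f := by
      apply closure_minimal support_deriv_subset isClosed_closure
    have hsub2 : tsupport (deriv (deriv f)) ⊆ tsupport f :=
      le_trans (closure_minimal support_deriv_subset isClosed_closure) hsub1
    have hsub3 : tsupport (deriv (deriv (deriv f))) ⊆ tsupport f :=
      le_trans (closure_minimal support_deriv_subset isClosed_closure) hsub2
    exact ⟨h0, image_eq_zero_of_notMem_tsupport (fun h => hx (hsub1 h)),
      image_eq_zero_of_notMem_tsupport (fun h => hx (hsub2 h)),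
      image_eq_zero_of_notMem_tsupport (fun h => hx (hsub3 h))⟩
  have hAc : HasCompactSupport A := HasCompactSupport.intro hK (fun x hx => by
    obtain ⟨h0, h1, h2, h3⟩ := hz x hx; simp [hA_def, h0])
  have hB1c : HasCompactSupport B₁ := HasCompactSupport.intro hK (fun x hx => by
    obtain ⟨h0, h1, h2, h3⟩ := hz x hx; simp [hB1_def, h0, h1])
  have hB2c : HasCompactSupport B₂ := HasCompactSupport.intro hK (fun x hx => by
    obtain ⟨h0, h1, h2, h3⟩ := hz x hx; simp [hB2_def, h0])
  have hB3c : HasCompactSupport B₃ := HasCompactSupport.intro hK (fun x hx => by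
    obtain ⟨h0, h1, h2, h3⟩ := hz x hx; simp [hB3_def, h0])
  -- continuity and integrability
  have hAcont : Continuous A := by
    apply Continuous.mul (hη0.continuous.mul hf0.continuous)
    exact (hf3.continuous.neg.add (hV0.continuous.mul hf1.continuous))
  have hB1cont : Continuous B₁ := by
    apply Continuous.mul hη1.continuous
    exact ((continuous_const.mul (hf1.continuous.pow 2)).add
      (hV0.continuous.mul (hf0.continuous.pow 2)))
  have hB2cont : Continuous B₂ :=
    (hη0.continuous.mul hV1.continuous).mul (hf0.continuous.pow 2)
  have hB3cont : Continuous B₃ := hη3.continuous.mul (hf0.continuous.pow 2)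
  have hAi : Integrable A := hAcont.integrable_of_hasCompactSupport hAc
  have hB1i : Integrable B₁ := hB1cont.integrable_of_hasCompactSupport hB1c
  have hB2i : Integrable B₂ := hB2cont.integrable_of_hasCompactSupport hB2c
  have hB3i : Integrable B₃ := hB3cont.integrable_of_hasCompactSupport hB3c
  -- the antiderivative
  set F : ℝ → ℝ := fun x => -(η x * f x * deriv (deriv f) x)
      + (1/2) * η x * (deriv f x) ^ 2 + deriv η x * f x * deriv f x
      - (1/2) * deriv (deriv η) x * (f x) ^ 2
      + (1/2) * η x * V₀ x * (f x) ^ 2 with hF_def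
  set E : ℝ → ℝ := fun x =>
    A x + (1/2) * B₁ x + (1/2) * B₂ x - (1/2) * B₃ x with hE_def
  have hFd : ∀ x, HasDerivAt F (E x) x := by
    intro x
    have h1 : HasDerivAt (fun x => -(η x * f x * deriv (deriv f) x))
        (-((deriv η x * f x + η x * deriv f x) * deriv (deriv f) x
           + η x * f x * deriv (deriv (deriv f)) x)) x :=
      (((dη x).mul (df x)).mul (df2 x)).neg
    have h2 : HasDerivAt (fun x => (1/2) * η x * (deriv f x) ^ 2)
        ((1/2) * deriv η x * (deriv f x) ^ 2
          + (1/2) * η x * (2 * deriv f x * deriv (deriv f) x)) x := by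
      have := (((dη x).const_mul (1/2 : ℝ)).mul ((df1 x).pow 2))
      refine this.congr_deriv ?_
      simp only [Pi.pow_apply]; ring
    have h3 : HasDerivAt (fun x => deriv η x * f x * deriv f x)
        ((deriv (deriv η) x * f x + deriv η x * deriv f x) * deriv f x
          + deriv η x * f x * deriv (deriv f) x) x :=
      ((dη1 x).mul (df x)).mul (df1 x)
    have h4 : HasDerivAt (fun x => (1/2) * deriv (deriv η) x * (f x) ^ 2)
        ((1/2) * deriv (deriv (deriv η)) x * (f x) ^ 2
          + (1/2) * deriv (deriv η) x * (2 * f x * deriv f x)) x := by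
      have := (((dη2 x).const_mul (1/2 : ℝ)).mul ((df x).pow 2))
      refine this.congr_deriv ?_
      simp only [Pi.pow_apply]; ring
    have h5 : HasDerivAt (fun x => (1/2) * η x * V₀ x * (f x) ^ 2)
        (((1/2) * deriv η x * V₀ x + (1/2) * η x * deriv V₀ x) * (f x) ^ 2
          + (1/2) * η x * V₀ x * (2 * f x * deriv f x)) x := by
      have := ((((dη x).const_mul (1/2 : ℝ)).mul (dV x)).mul ((df x).pow 2))
      refine this.congr_deriv ?_
      simp only [Pi.pow_apply, Pi.mul_apply]; ring
    have := (((h1.add h2).add h3).sub h4).add h5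
    refine this.congr_deriv ?_
    simp only [hE_def, hA_def, hB1_def, hB2_def, hB3_def]
    ring
  have hEcont : Continuous E :=
    ((hAcont.add (continuous_const.mul hB1cont)).add
      (continuous_const.mul hB2cont)).sub (continuous_const.mul hB3cont)
  have hFc : HasCompactSupport F := HasCompactSupport.intro hK (fun x hx => by
    obtain ⟨h0, h1, h2, h3⟩ := hz x hx; simp [hF_def, h0, h1])
  have hE0 : ∫ x : ℝ, E x = 0 := integral_hasDerivAt_eq_zero F E hFd hEcont hFc
  have hsplit : ∫ x : ℝ, E x = (∫ x : ℝ, A x) + (1/2) * (∫ x : ℝ, B₁ x)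
      + (1/2) * (∫ x : ℝ, B₂ x) - (1/2) * (∫ x : ℝ, B₃ x) := by
    simp only [hE_def]
    rw [integral_sub ?hg1 ?hg2, integral_add ?hg3 ?hg4, integral_add ?hg5 ?hg6,
      integral_const_mul _ _, integral_const_mul _ _, integral_const_mul _ _]
    case hg1 => exact (hAi.add (hB1i.const_mul _)).add (hB2i.const_mul _)
    case hg2 => exact hB3i.const_mul _
    case hg3 => exact hAi.add (hB1i.const_mul _)
    case hg4 => exact hB2i.const_mul _
    case hg5 => exact hAi
    case hg6 => exact hB1i.const_mul _
  rw [hsplit] at hE0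
  linarith
end

section
/- For any smooth bounded η with bounded derivatives up to order 4 and f smooth compactly supported: ∫ η f (ℒ(f'))' = −∫ η((f'')² + V₀(f')²) + 2∫ η''(f')² + (1/2)∫ η'' V₀ f² + (1/2)∫ η' V₀' f² − (1/2)∫ η⁽⁴⁾ f². -/
open MeasureTheory Set

theorem integral_deriv_opL_of_deriv_identity
    (η f : ℝ → ℝ)
    (hη : ContDiff ℝ (⊤ : ℕ∞) η) (hηb : ∀ n : ℕ, ∃ C : ℝ, ∀ x, |iteratedDeriv n η x| ≤ C)
    (hf : ContDiff ℝ (⊤ : ℕ∞) f) (hfc : HasCompactSupport f) :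
    ∫ x : ℝ, η x * f x * deriv (fun y => -(iteratedDeriv 3 f y) + V₀ y * deriv f y) x
      = -(∫ x : ℝ, η x * ((deriv (deriv f) x) ^ 2 + V₀ x * (deriv f x) ^ 2))
        + 2 * (∫ x : ℝ, iteratedDeriv 2 η x * (deriv f x) ^ 2)
        + (1 / 2) * (∫ x : ℝ, iteratedDeriv 2 η x * V₀ x * (f x) ^ 2)
        + (1 / 2) * (∫ x : ℝ, deriv η x * deriv V₀ x * (f x) ^ 2)
        - (1 / 2) * ∫ x : ℝ, iteratedDeriv 4 η x * (f x) ^ 2 := by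
  have hle : (1 : WithTop ℕ∞) ≤ ((⊤ : ℕ∞) : WithTop ℕ∞) := by exact_mod_cast le_top
  have hη' : ContDiff ℝ (⊤ : ℕ∞) η := hη.of_le (by simp)
  have hf' : ContDiff ℝ (⊤ : ℕ∞) f := hf.of_le (by simp)
  -- smoothness of V₀
  have hV : ContDiff ℝ (⊤ : ℕ∞) V₀ := by
    have h1 : ContDiff ℝ (⊤ : ℕ∞) (fun x : ℝ => Real.cosh (x / Real.sqrt 2)) :=
      Real.contDiff_cosh.comp (contDiff_id.div_const _)
    have h2 : ContDiff ℝ (⊤ : ℕ∞) (fun x : ℝ => (Real.cosh (x / Real.sqrt 2))⁻¹) :=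
      h1.inv fun x => (Real.cosh_pos _).ne'
    unfold V₀
    simp only [one_div]
    exact contDiff_const.sub (contDiff_const.mul (h2.pow 2))
  -- smoothness of iterated derivatives
  have hfn : ∀ n : ℕ, ContDiff ℝ (⊤ : ℕ∞) (iteratedDeriv n f) := fun n => by
    rw [iteratedDeriv_eq_iterate]; exact ContDiff.iterate_deriv n hf'
  have hηn : ∀ n : ℕ, ContDiff ℝ (⊤ : ℕ∞) (iteratedDeriv n η) := fun n => by
    rw [iteratedDeriv_eq_iterate]; exact ContDiff.iterate_deriv n hη'
  have e2 : deriv (deriv f) = iteratedDeriv 2 f := by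
    rw [iteratedDeriv_succ, iteratedDeriv_one]
  have edf : deriv f = iteratedDeriv 1 f := iteratedDeriv_one.symm
  have edη : deriv η = iteratedDeriv 1 η := iteratedDeriv_one.symm
  -- HasDerivAt facts
  have Hf : ∀ (n : ℕ) (x : ℝ), HasDerivAt (iteratedDeriv n f) (iteratedDeriv (n + 1) f x) x := by
    intro n x
    rw [iteratedDeriv_succ]
    exact ((hfn n).differentiable (by simp) x).hasDerivAt
  have Hη : ∀ (n : ℕ) (x : ℝ), HasDerivAt (iteratedDeriv n η) (iteratedDeriv (n + 1) η x) x := by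
    intro n x
    rw [iteratedDeriv_succ]
    exact ((hηn n).differentiable (by simp) x).hasDerivAt
  have Hf0 : ∀ x : ℝ, HasDerivAt f (deriv f x) x := fun x =>
    (hf'.differentiable (by simp) x).hasDerivAt
  have Hη0 : ∀ x : ℝ, HasDerivAt η (deriv η x) x := fun x =>
    (hη'.differentiable (by simp) x).hasDerivAt
  have Hf1 : ∀ x : ℝ, HasDerivAt (deriv f) (iteratedDeriv 2 f x) x := fun x => by
    rw [edf]; exact Hf 1 x
  have Hη1 : ∀ x : ℝ, HasDerivAt (deriv η) (iteratedDeriv 2 η x) x := fun x => by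
    rw [edη]; exact Hη 1 x
  have HV : ∀ x : ℝ, HasDerivAt V₀ (deriv V₀ x) x := fun x =>
    (hV.differentiable (by simp) x).hasDerivAt
  -- rewrite the operator derivative
  have hL : ∀ x : ℝ, deriv (fun y => -(iteratedDeriv 3 f y) + V₀ y * deriv f y) x
      = -(iteratedDeriv 4 f x) + (deriv V₀ x * deriv f x + V₀ x * iteratedDeriv 2 f x) := by
    intro x
    exact (((Hf 3 x).neg).add ((HV x).mul (Hf1 x))).deriv
  -- vanishing of iterated derivatives outside the support of f
  have hsupp : ∀ (n : ℕ) (x : ℝ), x ∉ tsupport f → iteratedDeriv n f x = 0 := by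
    intro n
    induction n with
    | zero =>
      intro x hx
      simpa [iteratedDeriv_zero] using image_eq_zero_of_notMem_tsupport hx
    | succ n ih =>
      intro x hx
      rw [iteratedDeriv_succ]
      have hev : iteratedDeriv n f =ᶠ[nhds x] fun _ => (0 : ℝ) :=
        Filter.eventuallyEq_of_mem
          ((isClosed_tsupport f).isOpen_compl.mem_nhds hx) fun y hy => ih y hy
      rw [hev.deriv_eq]
      simp
  have hsdf : ∀ x : ℝ, x ∉ tsupport f → deriv f x = 0 := fun x hx => by
    rw [edf]; exact hsupp 1 x hx
  -- the antiderivative of the total-derivative part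
  set G : ℝ → ℝ := fun x =>
      η x * V₀ x * f x * deriv f x
    - 1 / 2 * deriv η x * V₀ x * f x ^ 2
    - η x * f x * iteratedDeriv 3 f x
    + η x * deriv f x * iteratedDeriv 2 f x
    + deriv η x * f x * iteratedDeriv 2 f x
    - deriv η x * deriv f x ^ 2
    - iteratedDeriv 2 η x * f x * deriv f x
    + 1 / 2 * iteratedDeriv 3 η x * f x ^ 2 with hGdef
  set D : ℝ → ℝ := fun x =>
      η x * f x * (-(iteratedDeriv 4 f x) + (deriv V₀ x * deriv f x + V₀ x * iteratedDeriv 2 f x))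
    + η x * ((iteratedDeriv 2 f x) ^ 2 + V₀ x * (deriv f x) ^ 2)
    - 2 * (iteratedDeriv 2 η x * (deriv f x) ^ 2)
    - 1 / 2 * (iteratedDeriv 2 η x * V₀ x * f x ^ 2)
    - 1 / 2 * (deriv η x * deriv V₀ x * f x ^ 2)
    + 1 / 2 * (iteratedDeriv 4 η x * f x ^ 2) with hDdef
  have key : ∀ x : ℝ, HasDerivAt G (D x) x := by
    intro x
    have t1 := (((Hη0 x).mul (HV x)).mul (Hf0 x)).mul (Hf1 x)
    have t2 := ((((Hη1 x).const_mul (1 / 2 : ℝ)).mul (HV x)).mul ((Hf0 x).pow 2))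
    have t3 := ((Hη0 x).mul (Hf0 x)).mul (Hf 3 x)
    have t4 := ((Hη0 x).mul (Hf1 x)).mul (Hf 2 x)
    have t5 := ((Hη1 x).mul (Hf0 x)).mul (Hf 2 x)
    have t6 := (Hη1 x).mul ((Hf1 x).pow 2)
    have t7 := (((Hη 1 x).mul (Hf0 x)).mul (Hf1 x))
    have t8 := ((Hη 3 x).const_mul (1 / 2 : ℝ)).mul ((Hf0 x).pow 2)
    have t9 := ((Hη 2 x).mul (Hf0 x)).mul (Hf1 x)
    have h := (((((((t1.sub t2).sub t3).add t4).add t5).sub t6).sub t9).add t8)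
    rw [hGdef, hDdef]
    exact h.congr_deriv (by simp only [Pi.mul_apply, Pi.pow_apply]; push_cast; ring)
  -- smoothness of G
  have hηd : ContDiff ℝ (⊤ : ℕ∞) (deriv η) := by rw [edη]; exact hηn 1
  have hfd : ContDiff ℝ (⊤ : ℕ∞) (deriv f) := by rw [edf]; exact hfn 1
  have hGtop : ContDiff ℝ (⊤ : ℕ∞) G := by
    rw [hGdef]
    have c1 : ContDiff ℝ (⊤ : ℕ∞) (fun x : ℝ => η x * V₀ x * f x * deriv f x) :=
      ((hη'.mul hV).mul hf').mul hfd
    have c2 : ContDiff ℝ (⊤ : ℕ∞) (fun x : ℝ => 1 / 2 * deriv η x * V₀ x * f x ^ 2) :=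
      ((contDiff_const.mul hηd).mul hV).mul (hf'.pow 2)
    have c3 : ContDiff ℝ (⊤ : ℕ∞) (fun x : ℝ => η x * f x * iteratedDeriv 3 f x) :=
      (hη'.mul hf').mul (hfn 3)
    have c4 : ContDiff ℝ (⊤ : ℕ∞) (fun x : ℝ => η x * deriv f x * iteratedDeriv 2 f x) :=
      (hη'.mul hfd).mul (hfn 2)
    have c5 : ContDiff ℝ (⊤ : ℕ∞) (fun x : ℝ => deriv η x * f x * iteratedDeriv 2 f x) :=
      (hηd.mul hf').mul (hfn 2)
    have c6 : ContDiff ℝ (⊤ : ℕ∞) (fun x : ℝ => deriv η x * deriv f x ^ 2) :=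
      hηd.mul (hfd.pow 2)
    have c7 : ContDiff ℝ (⊤ : ℕ∞) (fun x : ℝ => iteratedDeriv 2 η x * f x * deriv f x) :=
      ((hηn 2).mul hf').mul hfd
    have c8 : ContDiff ℝ (⊤ : ℕ∞) (fun x : ℝ => 1 / 2 * iteratedDeriv 3 η x * f x ^ 2) :=
      (contDiff_const.mul (hηn 3)).mul (hf'.pow 2)
    exact (((((((c1.sub c2).sub c3).add c4).add c5).sub c6).sub c7).add c8)
  have hG1 : ContDiff ℝ 1 G := hGtop.of_le hle
  have hGc : HasCompactSupport G := by
    apply HasCompactSupport.intro hfc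
    intro x hx
    have h0 : f x = 0 := image_eq_zero_of_notMem_tsupport hx
    have h1 : deriv f x = 0 := hsdf x hx
    rw [hGdef]
    simp [h0, h1]
  have hGderiv_cont : Continuous (deriv G) := hGtop.continuous_deriv hle
  have hGint : Integrable (deriv G) := hGderiv_cont.integrable_of_hasCompactSupport hGc.deriv
  have hI0 : ∫ x : ℝ, deriv G x = 0 := by
    have h1 := HasCompactSupport.integral_Ioi_deriv_eq hG1 hGc 0
    have h2 := HasCompactSupport.integral_Iic_deriv_eq hG1 hGc 0
    rw [← intervalIntegral.integral_Iic_add_Ioi hGint.integrableOn hGint.integrableOn, h1, h2]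
    ring
  have hI : ∫ x : ℝ, D x = 0 := by
    have hfe : (fun x : ℝ => D x) = fun x : ℝ => deriv G x :=
      funext fun x => ((key x).deriv).symm
    rw [hfe]
    exact hI0
  -- integrability of the individual terms
  have cV' : Continuous (deriv V₀) := hV.continuous_deriv hle
  have i0 : Integrable (fun x : ℝ => η x * f x * (-(iteratedDeriv 4 f x) + (deriv V₀ x * deriv f x + V₀ x * iteratedDeriv 2 f x))) := by
    apply Continuous.integrable_of_hasCompactSupport
    · exact (hη'.continuous.mul hf'.continuous).mul
        (((hfn 4).continuous.neg).add ((cV'.mul hfd.continuous).add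
          (hV.continuous.mul (hfn 2).continuous)))
    · exact HasCompactSupport.intro hfc fun x hx => by
        simp [image_eq_zero_of_notMem_tsupport hx]
  have i1 : Integrable (fun x : ℝ => η x * ((iteratedDeriv 2 f x) ^ 2 + V₀ x * (deriv f x) ^ 2)) := by
    apply Continuous.integrable_of_hasCompactSupport
    · exact hη'.continuous.mul (((hfn 2).continuous.pow 2).add
        (hV.continuous.mul (hfd.continuous.pow 2)))
    · exact HasCompactSupport.intro hfc fun x hx => by
        simp [hsupp 2 x hx, hsdf x hx]
  have i2 : Integrable (fun x : ℝ => iteratedDeriv 2 η x * (deriv f x) ^ 2) := by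
    apply Continuous.integrable_of_hasCompactSupport
    · exact (hηn 2).continuous.mul (hfd.continuous.pow 2)
    · exact HasCompactSupport.intro hfc fun x hx => by simp [hsdf x hx]
  have i3 : Integrable (fun x : ℝ => iteratedDeriv 2 η x * V₀ x * f x ^ 2) := by
    apply Continuous.integrable_of_hasCompactSupport
    · exact ((hηn 2).continuous.mul hV.continuous).mul (hf'.continuous.pow 2)
    · exact HasCompactSupport.intro hfc fun x hx => by
        simp [image_eq_zero_of_notMem_tsupport hx]
  have i4 : Integrable (fun x : ℝ => deriv η x * deriv V₀ x * f x ^ 2) := by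
    apply Continuous.integrable_of_hasCompactSupport
    · exact (hηd.continuous.mul cV').mul (hf'.continuous.pow 2)
    · exact HasCompactSupport.intro hfc fun x hx => by
        simp [image_eq_zero_of_notMem_tsupport hx]
  have i5 : Integrable (fun x : ℝ => iteratedDeriv 4 η x * f x ^ 2) := by
    apply Continuous.integrable_of_hasCompactSupport
    · exact (hηn 4).continuous.mul (hf'.continuous.pow 2)
    · exact HasCompactSupport.intro hfc fun x hx => by
        simp [image_eq_zero_of_notMem_tsupport hx]
  have iA : Integrable (fun x : ℝ => η x * f x * (-(iteratedDeriv 4 f x) + (deriv V₀ x * deriv f x + V₀ x * iteratedDeriv 2 f x)) + η x * ((iteratedDeriv 2 f x) ^ 2 + V₀ x * (deriv f x) ^ 2)) := i0.add i1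
  have iB : Integrable (fun x : ℝ => η x * f x * (-(iteratedDeriv 4 f x) + (deriv V₀ x * deriv f x + V₀ x * iteratedDeriv 2 f x)) + η x * ((iteratedDeriv 2 f x) ^ 2 + V₀ x * (deriv f x) ^ 2) - 2 * (iteratedDeriv 2 η x * (deriv f x) ^ 2)) := iA.sub (i2.const_mul 2)
  have iC : Integrable (fun x : ℝ => η x * f x * (-(iteratedDeriv 4 f x) + (deriv V₀ x * deriv f x + V₀ x * iteratedDeriv 2 f x)) + η x * ((iteratedDeriv 2 f x) ^ 2 + V₀ x * (deriv f x) ^ 2) - 2 * (iteratedDeriv 2 η x * (deriv f x) ^ 2) - 1 / 2 * (iteratedDeriv 2 η x * V₀ x * f x ^ 2)) :=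
    iB.sub (i3.const_mul (1 / 2))
  have iD : Integrable (fun x : ℝ =>
      η x * f x * (-(iteratedDeriv 4 f x) + (deriv V₀ x * deriv f x + V₀ x * iteratedDeriv 2 f x)) + η x * ((iteratedDeriv 2 f x) ^ 2 + V₀ x * (deriv f x) ^ 2) - 2 * (iteratedDeriv 2 η x * (deriv f x) ^ 2) - 1 / 2 * (iteratedDeriv 2 η x * V₀ x * f x ^ 2) - 1 / 2 * (deriv η x * deriv V₀ x * f x ^ 2)) :=
    iC.sub (i4.const_mul (1 / 2))
  have hsplit : (∫ x : ℝ, D x)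
      = (∫ x : ℝ, η x * f x * (-(iteratedDeriv 4 f x) + (deriv V₀ x * deriv f x + V₀ x * iteratedDeriv 2 f x))) + (∫ x : ℝ, η x * ((iteratedDeriv 2 f x) ^ 2 + V₀ x * (deriv f x) ^ 2)) - 2 * (∫ x : ℝ, iteratedDeriv 2 η x * (deriv f x) ^ 2)
        - 1 / 2 * (∫ x : ℝ, iteratedDeriv 2 η x * V₀ x * f x ^ 2) - 1 / 2 * (∫ x : ℝ, deriv η x * deriv V₀ x * f x ^ 2)
        + 1 / 2 * (∫ x : ℝ, iteratedDeriv 4 η x * f x ^ 2) := by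
    simp only [hDdef]
    rw [integral_add iD (i5.const_mul (1 / 2)), integral_sub iC (i4.const_mul (1 / 2)),
      integral_sub iB (i3.const_mul (1 / 2)), integral_sub iA (i2.const_mul 2),
      integral_add i0 i1, integral_const_mul, integral_const_mul, integral_const_mul,
      integral_const_mul]
  simp only [hL, e2]
  linarith [hI, hsplit]
end

section
/- The operator ℒ_# = −2∂ₓ² + 2 − 3sech²(x/√2) is coercive without orthogonality conditions: there exists m₀ > 0 (one may take m₀ = 1/5) such that for all z ∈ H¹(ℝ), ∫ (2(z')² + (2 − 3sech²(x/√2)) z²) ≥ m₀ ‖z‖²_{H¹}. -/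
/-!
For any bounded `w` with bounded derivative, expanding `0 ≤ ∫ (z' + w z)²` and integrating the
cross term `2 w z z' = (w z²)' - w' z²` by parts gives `∫ (w' - w²) z² ≤ ∫ z'²`. For
`w = tanh (x / √2)` one has `w' - w² = (1 + 1/√2) sech² (x / √2) - 1`. After subtracting
`(1/5) (∫ z² + ∫ z'²)`, applying this bound to the remaining `(9/5) ∫ z'²` leaves the potential
`(9/5 (1 + 1/√2) - 3) sech² (x / √2)`, which is nonnegative because `1/√2 ≥ 2/3`.
-/

open MeasureTheory Real

theorem Real.tanh_sq_add_one_div_cosh_sq (x : ℝ) : tanh x ^ 2 + (1 / cosh x) ^ 2 = 1 := by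
  have := cosh_sq_sub_sinh_sq x
  rw [tanh_eq_sinh_div_cosh]
  field_simp
  linarith

theorem Real.hasDerivAt_tanh (x : ℝ) : HasDerivAt tanh ((1 / cosh x) ^ 2) x := by
  rw [show tanh = sinh / cosh from funext tanh_eq_sinh_div_cosh]
  refine ((hasDerivAt_sinh x).div (hasDerivAt_cosh x) (cosh_pos x).ne').congr_deriv ?_
  have := cosh_sq_sub_sinh_sq x
  field_simp
  linarith

@[fun_prop]
theorem Real.continuous_tanh : Continuous tanh :=
  continuous_iff_continuousAt.2 fun x => (hasDerivAt_tanh x).continuousAt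

theorem integral_riccati_mul_sq_le_integral_deriv_sq {w w' : ℝ → ℝ} {C C' : ℝ}
    (hw : ∀ x, HasDerivAt w (w' x) x) (hw_bdd : ∀ x, |w x| ≤ C) (hw'_bdd : ∀ x, |w' x| ≤ C')
    {z : ℝ → ℝ} (hz : Differentiable ℝ z) (hz2 : MemLp z 2 volume)
    (hz'2 : MemLp (deriv z) 2 volume) :
    ∫ x, (w' x - w x ^ 2) * z x ^ 2 ≤ ∫ x, deriv z x ^ 2 := by
  have hw_meas : AEStronglyMeasurable w volume :=
    (continuous_iff_continuousAt.2 fun x => (hw x).continuousAt).aestronglyMeasurable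
  have hw'_meas : AEStronglyMeasurable w' volume := by
    rw [show w' = deriv w from funext fun x => (hw x).deriv.symm]
    exact (measurable_deriv w).aestronglyMeasurable
  have hzsq := hz2.integrable_sq
  have hz'sq := hz'2.integrable_sq
  have hwz : Integrable (fun x => w x * z x ^ 2) :=
    hzsq.bdd_mul hw_meas (.of_forall hw_bdd)
  have hw'z : Integrable (fun x => w' x * z x ^ 2) :=
    hzsq.bdd_mul hw'_meas (.of_forall hw'_bdd)
  have hwzz' : Integrable (fun x => w x * (2 * z x * deriv z x)) := by
    refine Integrable.bdd_mul ?_ hw_meas (.of_forall hw_bdd)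
    simpa [mul_assoc] using (hz2.integrable_mul hz'2).const_mul 2
  have hRz : Integrable (fun x => (w' x - w x ^ 2) * z x ^ 2) := by
    refine hzsq.bdd_mul (c := C' + C ^ 2) (hw'_meas.sub (hw_meas.pow 2)) (.of_forall fun x => ?_)
    calc ‖w' x - w x ^ 2‖ ≤ |w' x| + |w x ^ 2| := abs_sub _ _
      _ = |w' x| + |w x| ^ 2 := by rw [abs_pow]
      _ ≤ C' + C ^ 2 := by gcongr; exacts [hw'_bdd x, hw_bdd x]
  have h_parts : ∫ x, (w' x * z x ^ 2 + w x * (2 * z x * deriv z x)) = 0 := by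
    refine integral_eq_zero_of_hasDerivAt_of_integrable (fun x => ?_) (hw'z.add hwzz') hwz
    exact ((hw x).mul ((hz x).hasDerivAt.pow 2)).congr_deriv (by simp)
  have h_sq : 0 ≤ ∫ x, (deriv z x ^ 2 - (w' x - w x ^ 2) * z x ^ 2
      + (w' x * z x ^ 2 + w x * (2 * z x * deriv z x))) :=
    integral_nonneg fun x => le_of_le_of_eq (sq_nonneg (deriv z x + w x * z x)) (by ring)
  rw [integral_add, integral_sub, h_parts] at h_sq
  · linarith
  exacts [hz'sq, hRz, hz'sq.sub hRz, hw'z.add hwzz']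

theorem hasDerivAt_tanh_div_sqrt_two (x : ℝ) :
    HasDerivAt (fun y => tanh (y / √2)) ((1 / cosh (x / √2)) ^ 2 / √2) x := by
  refine ((hasDerivAt_tanh (x / √2)).comp x ((hasDerivAt_id x).div_const √2)).congr_deriv ?_
  ring

theorem one_div_cosh_sq_mem_Icc (x : ℝ) : (1 / cosh x) ^ 2 ∈ Set.Icc 0 1 :=
  ⟨by positivity, pow_le_one₀ (by positivity) (div_le_one_of_le₀ (one_le_cosh x) (by positivity))⟩

theorem one_div_cosh_sq_div_sqrt_two_mem_Icc (x : ℝ) : (1 / cosh x) ^ 2 / √2 ∈ Set.Icc 0 1 := by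
  have h_s := one_div_cosh_sq_mem_Icc x
  exact ⟨by positivity, (div_le_self h_s.1 (one_le_sqrt.2 one_le_two)).trans h_s.2⟩

theorem two_thirds_le_one_div_sqrt_two : (2 / 3 : ℝ) ≤ 1 / √2 := by
  rw [le_div_iff₀ (by positivity)]
  nlinarith [sq_sqrt (show (0 : ℝ) ≤ 2 by norm_num), sqrt_nonneg 2]

/-- The Riccati potential `w' - w²` of `w x = tanh (x / √2)`. -/
noncomputable def tanhRiccati (x : ℝ) : ℝ := (1 / cosh (x / √2)) ^ 2 / √2 - tanh (x / √2) ^ 2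

theorem abs_tanhRiccati_le_one (x : ℝ) : |tanhRiccati x| ≤ 1 := by
  have h_w' := one_div_cosh_sq_div_sqrt_two_mem_Icc (x / √2)
  have h_w := tanh_sq_lt_one (x / √2)
  unfold tanhRiccati
  exact abs_le.2 ⟨by linarith [h_w'.1], by linarith [h_w'.2, sq_nonneg (tanh (x / √2))]⟩

theorem one_fifth_sub_tanhRiccati_le_V₀ (x : ℝ) : 1 / 5 - 9 / 5 * tanhRiccati x ≤ V₀ x := by
  have h_tanh := tanh_sq_add_one_div_cosh_sq (x / √2)
  have h_s := (one_div_cosh_sq_mem_Icc (x / √2)).1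
  have h_q : 2 / 3 * (1 / cosh (x / √2)) ^ 2 ≤ (1 / cosh (x / √2)) ^ 2 / √2 := by
    simpa only [one_div_mul_eq_div] using
      mul_le_mul_of_nonneg_right two_thirds_le_one_div_sqrt_two h_s
  simp only [V₀, tanhRiccati]
  linarith

theorem abs_V₀_le_two (x : ℝ) : |V₀ x| ≤ 2 := by
  have h_s := one_div_cosh_sq_mem_Icc (x / √2)
  simp only [V₀]
  exact abs_le.2 ⟨by linarith [h_s.2], by linarith [h_s.1]⟩

theorem coercivity_without_orthogonality :
    ∃ m₀ : ℝ, 0 < m₀ ∧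
      ∀ z : ℝ → ℝ, Differentiable ℝ z →
        MemLp z 2 (volume : Measure ℝ) → MemLp (deriv z) 2 (volume : Measure ℝ) →
        ∫ x : ℝ, (2 * (deriv z x) ^ 2 + V₀ x * (z x) ^ 2)
          ≥ m₀ * ((∫ x : ℝ, (z x) ^ 2) + ∫ x : ℝ, (deriv z x) ^ 2) := by
  refine ⟨1 / 5, by norm_num, fun z hz hz2 hz'2 => ?_⟩
  have h_kin : ∫ x, tanhRiccati x * z x ^ 2 ≤ ∫ x, deriv z x ^ 2 :=
    integral_riccati_mul_sq_le_integral_deriv_sq hasDerivAt_tanh_div_sqrt_two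
      (fun x => (abs_tanh_lt_one _).le)
      (fun x => (abs_of_nonneg (one_div_cosh_sq_div_sqrt_two_mem_Icc _).1).trans_le
        (one_div_cosh_sq_div_sqrt_two_mem_Icc _).2) hz hz2 hz'2
  have hzsq := hz2.integrable_sq
  have hV₀z : Integrable (fun x => V₀ x * z x ^ 2) :=
    hzsq.bdd_mul (by unfold V₀; fun_prop : Measurable V₀).aestronglyMeasurable
      (.of_forall abs_V₀_le_two)
  have hRz : Integrable (fun x => tanhRiccati x * z x ^ 2) :=
    hzsq.bdd_mul (by unfold tanhRiccati; fun_prop : Measurable tanhRiccati).aestronglyMeasurable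
      (.of_forall abs_tanhRiccati_le_one)
  have h_pot : ∫ x, (1 / 5 * z x ^ 2 - 9 / 5 * (tanhRiccati x * z x ^ 2)) ≤ ∫ x, V₀ x * z x ^ 2 :=
    integral_mono ((hzsq.const_mul _).sub (hRz.const_mul _)) hV₀z fun x => by
      nlinarith [mul_le_mul_of_nonneg_right (one_fifth_sub_tanhRiccati_le_V₀ x) (sq_nonneg (z x))]
  rw [integral_sub (hzsq.const_mul _) (hRz.const_mul _), integral_const_mul,
    integral_const_mul] at h_pot
  rw [ge_iff_le, integral_add (hz'2.integrable_sq.const_mul 2) hV₀z, integral_const_mul]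
  linarith
end
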